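/- arXiv:2402.12386 — 4 statements merged into one kernel-verified Lean document; each statement's English description precedes it below -/
import Mathlib

section
/- Let 𝓕 = {[0), [1)} and let B_ω^𝓕 be the corresponding monoid. For every k ∈ ω, the map γ_k defined by (i,j,[0))γ_k = (i,j,[1))γ_k = (ki, kj, [0)) for all i,j ∈ ω is a monoid endomorphism of B_ω^𝓕. -/
/-- `[a) = {x ∈ ω : x ≥ a}`. -/
def seg (a : ℕ) : Set ℕ := {x | a ≤ x}

/-- `n + F` taken within `ω`: `{x ∈ ω : x = n + k for some k ∈ F}`. -/
def shift (n : ℤ) (F : Set ℕ) : Set ℕ := {x | ∃ k ∈ F, (x : ℤ) = n + k}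

/-- The carrier `B_ω × 𝒫(ω)`. -/
abbrev BF := ℕ × ℕ × Set ℕ

/-- The multiplication on `B_ω × 𝒫(ω)`. -/
def bfMul (x y : BF) : BF :=
  if x.2.1 ≤ y.1 then
    (x.1 + (y.1 - x.2.1), y.2.1, shift ((x.2.1 : ℤ) - y.1) x.2.2 ∩ y.2.2)
  else
    (x.1, (x.2.1 - y.1) + y.2.1, x.2.2 ∩ shift ((y.1 : ℤ) - x.2.1) y.2.2)

/-- The family `𝓕 = {[0), [1)}`. -/
def Fam : Set (Set ℕ) := {seg 0, seg 1}

/-- The carrier of the monoid `B_ω^𝓕` for `𝓕 = {[0),[1)}`. -/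
def Dom : Set BF := {x | x.2.2 ∈ Fam}

/-- The map `γ_k`. -/
def gam (k : ℕ) : BF → BF := fun x => (k * x.1, k * x.2.1, seg 0)

open Classical

/-- The map `δ_k`. -/
noncomputable def del (k : ℕ) : BF → BF := fun x =>
  if x.2.2 = seg 1 then (k * (x.1 + 1), k * (x.2.1 + 1), seg 0)
  else (k * x.1, k * x.2.1, seg 0)

/-- `e` is a monoid endomorphism of `B_ω^𝓕` for `𝓕 = {[0),[1)}`. -/
def IsMonEnd (e : BF → BF) : Prop :=
  (∀ x ∈ Dom, e x ∈ Dom) ∧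
  e (0, 0, seg 0) = (0, 0, seg 0) ∧
  ∀ x ∈ Dom, ∀ y ∈ Dom, e (bfMul x y) = bfMul (e x) (e y)

theorem shift_seg_zero_of_nonpos {n : ℤ} (hn : n ≤ 0) : shift n (seg 0) = seg 0 := by
  ext x
  refine ⟨fun _ => Nat.zero_le x, fun _ => ⟨x + (-n).toNat, Nat.zero_le _, ?_⟩⟩
  push_cast
  omega

theorem bfMul_seg_zero (i₁ j₁ i₂ j₂ : ℕ) :
    bfMul (i₁, j₁, seg 0) (i₂, j₂, seg 0) =
      if j₁ ≤ i₂ then (i₁ + (i₂ - j₁), j₂, seg 0) else (i₁, j₁ - i₂ + j₂, seg 0) := by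
  unfold bfMul
  split_ifs <;> rw [shift_seg_zero_of_nonpos (by omega), Set.inter_self]

/- `γ_k` forgets the set component, so only the bicyclic part of the product matters, and
multiplying by `k > 0` preserves the comparison `j₁ ≤ i₂` that selects the branch. -/
theorem gam_bfMul (k : ℕ) (x y : BF) : gam k (bfMul x y) = bfMul (gam k x) (gam k y) := by
  obtain ⟨i₁, j₁, F₁⟩ := x
  obtain ⟨i₂, j₂, F₂⟩ := y
  rcases Nat.eq_zero_or_pos k with rfl | hk
  · simp [gam, bfMul_seg_zero]
  simp only [gam, bfMul_seg_zero, Nat.mul_le_mul_left_iff hk]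
  unfold bfMul
  split_ifs <;> simp [Nat.mul_add, Nat.mul_sub]

/-- For every `k ∈ ω`, the map `γ_k` is a monoid endomorphism of `B_ω^𝓕`. -/
theorem stmt6 : ∀ k : ℕ, IsMonEnd (gam k) :=
  fun k => ⟨fun _ _ => Or.inl rfl, by simp [gam], fun x _ y _ => gam_bfMul k x y⟩
end

section
/- Let 𝓕 = {[0), [1)} and let B_ω^𝓕 be the corresponding monoid. For every k ∈ ω, the map δ_k defined by (i,j,[0))δ_k = (ki, kj, [0)) and (i,j,[1))δ_k = (k(i+1), k(j+1), [0)) for all i,j ∈ ω is a monoid endomorphism of B_ω^𝓕. -/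
open Classical

lemma seg_inj {a b : ℕ} : seg a = seg b ↔ a = b := by
  constructor
  · intro h
    have h1 := Set.ext_iff.mp h a
    have h2 := Set.ext_iff.mp h b
    simp [seg] at h1 h2
    omega
  · rintro rfl; rfl

lemma shift_seg (n : ℤ) (a : ℕ) : shift n (seg a) = seg ((n + a).toNat) := by
  ext x
  simp only [shift, seg, Set.mem_setOf_eq]
  constructor
  · rintro ⟨c, hc, h⟩; omega
  · intro h; exact ⟨((x : ℤ) - n).toNat, by omega, by omega⟩

lemma seg_inter (a b : ℕ) : seg a ∩ seg b = seg (max a b) := by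
  ext x; simp only [seg, Set.mem_inter_iff, Set.mem_setOf_eq]; omega

/-- For every `k ∈ ω`, the map `δ_k` is a monoid endomorphism of `B_ω^𝓕`. -/
theorem stmt7 : ∀ k : ℕ, IsMonEnd (del k) := by
  intro k
  refine ⟨fun x _ => ?_, ?_, ?_⟩
  · unfold del Dom Fam
    split <;> simp
  · simp [del, seg_inj]
  · rintro ⟨i1, j1, F1⟩ hx ⟨i2, j2, F2⟩ hy
    simp only [Dom, Fam, Set.mem_setOf_eq, Set.mem_insert_iff, Set.mem_singleton_iff] at hx hy
    rcases hx with rfl | rfl <;> rcases hy with rfl | rfl <;>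
      rcases lt_trichotomy j1 i2 with h | h | h <;>
      first
      | · have f1 : k * j1 + k ≤ k * i2 := by
            have := Nat.mul_le_mul_left k (Nat.succ_le_of_lt h)
            simpa [Nat.mul_succ] using this
          simp only [bfMul, del, shift_seg, seg_inter, seg_inj, h.le, if_true,
            Nat.mul_add, Nat.mul_sub, Nat.mul_one]
          split_ifs <;>
            simp only [bfMul, del, shift_seg, seg_inter, seg_inj, Nat.mul_add,
              Nat.mul_sub, Nat.mul_one, Prod.mk.injEq, true_and] at * <;>
          omega
      | · subst h
          simp only [bfMul, del, shift_seg, seg_inter, seg_inj, le_refl, if_true,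
            Nat.mul_add, Nat.mul_sub, Nat.mul_one]
          split_ifs <;>
            simp only [bfMul, del, shift_seg, seg_inter, seg_inj, Nat.mul_add,
              Nat.mul_sub, Nat.mul_one, Prod.mk.injEq, true_and] at * <;>
          omega
      | · have hn : ¬ j1 ≤ i2 := by omega
          have f1 : k * i2 + k ≤ k * j1 := by
            have := Nat.mul_le_mul_left k (Nat.succ_le_of_lt h)
            simpa [Nat.mul_succ] using this
          simp only [bfMul, del, shift_seg, seg_inter, seg_inj, hn, if_false,
            Nat.mul_add, Nat.mul_sub, Nat.mul_one]
          split_ifs <;>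
            simp only [bfMul, del, shift_seg, seg_inter, seg_inj, Nat.mul_add,
              Nat.mul_sub, Nat.mul_one, Prod.mk.injEq, true_and] at * <;>
          omega
end

section
/- Let 𝓕 = {[0), [1)} and let End*(B_ω^𝓕) = {γ_k : k ≥ 1} ∪ {δ_k : k ≥ 1} be the semigroup of non-injective non-annihilating monoid endomorphisms of B_ω^𝓕 under composition. Then End*(B_ω^𝓕) is isomorphic to the direct product LZ₂ × (ℕ⁺, ·), where LZ₂ is the two-element left-zero semigroup and (ℕ⁺, ·) is the multiplicative semigroup of positive integers. -/
open Classical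

/-!
Every map `γ_k`, `δ_k` lands in elements with third coordinate `[0)`, on which `δ_m` acts as `γ_m`.
Hence a composite (first `f`, then `g`) is `γ` or `δ` according to `f`, with index the product of
the indices: the flag `γ`/`δ` multiplies as a left-zero semigroup and the index as `(ℕ⁺, ·)`.
-/

open Set Function

lemma seg_zero_ne_seg_one : seg 0 ≠ seg 1 := by
  intro h
  have h0 : (0 : ℕ) ∈ seg 1 := h ▸ Nat.zero_le 0
  exact absurd h0 (by simp [seg])

lemma del_apply_of_ne {x : BF} (k : ℕ) (hx : x.2.2 ≠ seg 1) : del k x = gam k x := by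
  simp [del, gam, hx]

lemma gam_comp_gam (k m : ℕ) : gam m ∘ gam k = gam (k * m) := by
  funext x
  simp only [gam, comp_apply]
  ac_rfl

lemma gam_comp_del (k m : ℕ) : gam m ∘ del k = del (k * m) := by
  funext x
  by_cases hx : x.2.2 = seg 1 <;> simp only [del, gam, comp_apply, hx, if_true, if_false] <;> ac_rfl

noncomputable def endOf (p : Bool × ℕ+) : BF → BF :=
  if p.1 then del p.2 else gam p.2

lemma endOf_apply_snd_snd (p : Bool × ℕ+) (x : BF) : (endOf p x).2.2 = seg 0 := by
  unfold endOf
  split_ifs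
  · unfold del
    split_ifs <;> rfl
  · rfl

lemma endOf_apply_of_ne (p : Bool × ℕ+) {x : BF} (hx : x.2.2 ≠ seg 1) :
    endOf p x = gam p.2 x := by
  unfold endOf
  split_ifs
  exacts [del_apply_of_ne _ hx, rfl]

lemma endOf_comp (p q : Bool × ℕ+) : endOf q ∘ endOf p = endOf (p.1, p.2 * q.2) := by
  have hq : endOf q ∘ endOf p = gam q.2 ∘ endOf p := funext fun x =>
    endOf_apply_of_ne q ((endOf_apply_snd_snd p x).trans_ne seg_zero_ne_seg_one)
  rw [hq]
  obtain ⟨_ | _, k⟩ := p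
  exacts [gam_comp_gam _ _, gam_comp_del _ _]

lemma endOf_injective : Injective endOf := by
  rintro ⟨b, k⟩ ⟨c, m⟩ h
  have h₁ := congrFun h (1, 0, seg 0)
  rw [endOf_apply_of_ne _ seg_zero_ne_seg_one, endOf_apply_of_ne _ seg_zero_ne_seg_one] at h₁
  obtain rfl : k = m := PNat.coe_injective (by simpa [gam] using h₁)
  have h₂ := congrArg Prod.fst (congrFun h (0, 0, seg 1))
  cases b <;> cases c <;> simp [endOf, del, gam, @eq_comm ℕ 0] at h₂ ⊢

lemma range_endOf :
    range endOf = {f | ∃ k : ℕ, 0 < k ∧ (f = gam k ∨ f = del k)} := by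
  ext f
  constructor
  · rintro ⟨⟨_ | _, k⟩, rfl⟩
    exacts [⟨k, k.pos, Or.inl rfl⟩, ⟨k, k.pos, Or.inr rfl⟩]
  · rintro ⟨k, hk, rfl | rfl⟩
    exacts [⟨(false, ⟨k, hk⟩), rfl⟩, ⟨(true, ⟨k, hk⟩), rfl⟩]

/-- The semigroup `End*(B_ω^𝓕) = {γ_k : k ≥ 1} ∪ {δ_k : k ≥ 1}` under left-to-right
composition is isomorphic to the direct product of the two-element left-zero semigroup
and the multiplicative semigroup of positive integers. -/
theorem stmt13 :
    ∃ φ : (BF → BF) → Bool × ℕ+,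
      Set.BijOn φ {f | ∃ k : ℕ, 0 < k ∧ (f = gam k ∨ f = del k)} Set.univ ∧
      ∀ f ∈ {f : BF → BF | ∃ k : ℕ, 0 < k ∧ (f = gam k ∨ f = del k)},
        ∀ g ∈ {f : BF → BF | ∃ k : ℕ, 0 < k ∧ (f = gam k ∨ f = del k)},
          φ (fun x => g (f x)) = ((φ f).1, (φ f).2 * (φ g).2) := by
  rw [← range_endOf]
  have hbij : BijOn endOf univ (range endOf) := image_univ ▸ endOf_injective.bijOn_image
  have hinv := hbij.invOn_invFunOn
  refine ⟨invFunOn endOf univ, hbij.symm hinv.symm, ?_⟩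
  rintro _ ⟨p, rfl⟩ _ ⟨q, rfl⟩
  change invFunOn endOf univ (endOf q ∘ endOf p) = _
  rw [endOf_comp, hinv.1 (mem_univ _), hinv.1 (mem_univ p), hinv.1 (mem_univ q)]
end

section
/- Every monoid endomorphism h of the bicyclic monoid B_ω = (ω × ω, ·), with (i₁,j₁)·(i₂,j₂) = (i₁-j₁+i₂, j₂) if j₁ ≤ i₂ and (i₁, j₁-i₂+j₂) if j₁ ≥ i₂ and identity (0,0), has the form (i,j)h = (ki, kj) for some fixed k ∈ ω. -/
/-- The bicyclic monoid operation on `ω × ω`. -/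
def bic (p q : ℕ × ℕ) : ℕ × ℕ :=
  if p.2 ≤ q.1 then (p.1 + (q.1 - p.2), q.2) else (p.1, (p.2 - q.1) + q.2)

/-- Every monoid endomorphism of the bicyclic monoid has the form `(i,j) ↦ (ki,kj)`. -/
theorem stmt19 (h : ℕ × ℕ → ℕ × ℕ)
    (h1 : h (0, 0) = (0, 0))
    (hm : ∀ p q : ℕ × ℕ, h (bic p q) = bic (h p) (h q)) :
    ∃ k : ℕ, ∀ i j : ℕ, h (i, j) = (k * i, k * j) := by
  have key : bic (h (0,1)) (h (1,0)) = (0,0) := by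
    rw [← hm]
    have : bic ((0:ℕ),(1:ℕ)) (1,0) = (0,0) := by simp [bic]
    rw [this, h1]
  set k := (h (1,0)).1 with hk
  have hA : h (1,0) = (k, 0) ∧ h (0,1) = (0, k) := by
    unfold bic at key
    split_ifs at key with hc
    · rw [Prod.ext_iff] at key
      simp at key
      constructor
      · rw [Prod.ext_iff]; exact ⟨rfl, key.2⟩
      · rw [Prod.ext_iff]
        refine ⟨key.1.1, ?_⟩
        omega
    · rw [Prod.ext_iff] at key
      simp at key
      omega
  obtain ⟨hp, hq⟩ := hA
  have hi : ∀ i, h (i, 0) = (k * i, 0) := by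
    intro i
    induction i with
    | zero => simpa using h1
    | succ n ih =>
      have e : bic ((1:ℕ),(0:ℕ)) (n,0) = (n+1,0) := by simp [bic]; omega
      have := hm (1,0) (n,0)
      rw [e, hp, ih] at this
      rw [this]
      simp [bic]; ring
  have hj : ∀ j, h (0, j) = (0, k * j) := by
    intro j
    induction j with
    | zero => simpa using h1
    | succ n ih =>
      have e : bic ((0:ℕ),(1:ℕ)) (0,n) = (0,n+1) := by simp [bic]; omega
      have := hm (0,1) (0,n)
      rw [e, hq, ih] at this
      rw [this]
      rcases Nat.eq_zero_or_pos k with h0 | h0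
      · simp [bic, h0]
      · simp [bic, Nat.not_le.mpr h0]; ring
  refine ⟨k, fun i j => ?_⟩
  have e : bic ((i:ℕ),(0:ℕ)) (0,j) = (i,j) := by simp [bic]
  have := hm (i,0) (0,j)
  rw [e, hi, hj] at this
  rw [this]
  simp [bic]
end
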